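/- Let V be a finite-dimensional complex inner product space, Δ > 0, and let W : ℝ → ℝ be integrable, odd on ℝ ∖ {0}, with ∫_ℝ W(t) e^{i t λ} dt = i/λ for all real λ with |λ| ≥ Δ. Let H : [0, s] → (self-adjoint operators on V) be continuously differentiable, such that for every θ ∈ [0, s] the lowest eigenvalue E0(θ) of H(θ) is simple and every other eigenvalue E of H(θ) satisfies E − E0(θ) ≥ Δ. Let ψ0 : [0, s] → V be a continuously differentiable family of unit ground-state eigenvectors satisfying the parallel transport condition ⟨ψ0(θ), ∂_θ ψ0(θ)⟩ = 0. Define S(θ) = ∫_ℝ W(t) e^{itH(θ)} (∂_θ H(θ)) e^{−itH(θ)} dt and let U : [0, s] → (operators on V) solve ∂_θ U(θ) = i S(θ) U(θ) with U(0) = I. Then U(θ) ψ0(0) = ψ0(θ) for every θ ∈ [0, s]. -/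

import Mathlib

/-!
Both `θ ↦ U(θ) ψ0(0)` and `ψ0` solve the linear equation `x' = i S(θ) x` with the same initial
value. Its coefficient is bounded, `‖S(θ)‖ ≤ ‖W‖₁ ‖∂H(θ)‖`, because conjugation by the unitaries
`e^{itH}` is isometric, so the two solutions agree by uniqueness for Lipschitz ODEs.

That `ψ0` is a solution is a spectral computation. For an eigenvector `b` of `H` with eigenvalue
`μ`, `⟪b, S ψ0⟫ = Ŵ(μ - E0) ⟪b, ∂H ψ0⟫` where `Ŵ(λ) = ∫ W(t) e^{itλ} dt`. If `μ = E0`, then `b`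
is a multiple of `ψ0`, and both `⟪b, i S ψ0⟫` (as `Ŵ(0) = 0` by oddness) and `⟪b, ψ0'⟫` (by
parallel transport) vanish. Otherwise `μ - E0 ≥ Δ`, differentiating `H ψ0 = E0 ψ0` gives
`⟪b, ∂H ψ0⟫ = (E0 - μ) ⟪b, ψ0'⟫`, and `Ŵ(μ - E0) = i / (μ - E0)` turns this into
`⟪b, i S ψ0⟫ = ⟪b, ψ0'⟫`.
-/

open scoped ComplexInnerProductSpace
open MeasureTheory Set Topology

theorem eqOn_Icc_of_linear_ODE {𝕜 E : Type*} [NontriviallyNormedField 𝕜] [NormedAddCommGroup E]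
    [NormedSpace ℝ E] [NormedSpace 𝕜 E] {A : ℝ → E →L[𝕜] E} {K : ℝ} {f g : ℝ → E} {a b : ℝ}
    (hA : ∀ t ∈ Ico a b, ‖A t‖ ≤ K)
    (hf : ContinuousOn f (Icc a b))
    (hf' : ∀ t ∈ Ico a b, HasDerivWithinAt f (A t (f t)) (Icc a b) t)
    (hg : ContinuousOn g (Icc a b))
    (hg' : ∀ t ∈ Ico a b, HasDerivWithinAt g (A t (g t)) (Icc a b) t)
    (ha : f a = g a) : EqOn f g (Icc a b) := by
  have hIcc : ∀ t ∈ Ico a b, Icc a b ∈ 𝓝[≥] t := fun t ht =>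
    Filter.mem_of_superset (Icc_mem_nhdsGE ht.2) (Icc_subset_Icc_left ht.1)
  refine ODE_solution_unique_of_mem_Icc_right (K := K.toNNReal) (s := fun _ => univ)
    (fun t ht => ((A t).lipschitz.weaken ?_).lipschitzOnWith) hf
    (fun t ht => (hf' t ht).mono_of_mem_nhdsWithin (hIcc t ht)) (fun _ _ => trivial) hg
    (fun t ht => (hg' t ht).mono_of_mem_nhdsWithin (hIcc t ht)) (fun _ _ => trivial) ha
  rw [← NNReal.coe_le_coe, coe_nnnorm]
  exact (hA t ht).trans (le_max_left _ _)

theorem HasDerivWithinAt.clm_apply_of_complex {F G : Type*} [NormedAddCommGroup F]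
    [NormedSpace ℂ F] [NormedAddCommGroup G] [NormedSpace ℂ G] {s : Set ℝ} {x : ℝ}
    {c : ℝ → F →L[ℂ] G} {c' : F →L[ℂ] G} {u : ℝ → F} {u' : F}
    (hc : HasDerivWithinAt c c' s x) (hu : HasDerivWithinAt u u' s x) :
    HasDerivWithinAt (fun y => c y (u y)) (c' (u x) + c x u') s x :=
  ((ContinuousLinearMap.restrictScalarsL ℂ F G ℝ ℝ).hasFDerivAt.comp_hasDerivWithinAt x
    hc).clm_apply hu

theorem integral_eq_zero_of_odd {E : Type*} [NormedAddCommGroup E] [NormedSpace ℝ E] {f : ℝ → E}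
    (hf : ∀ t ≠ 0, f (-t) = -f t) : ∫ t, f t = 0 := by
  have hodd : (fun t => f (-t)) =ᵐ[volume] fun t => -f t :=
    Filter.eventuallyEq_of_mem (compl_mem_ae_iff.mpr (measure_singleton 0)) hf
  have h := integral_neg_eq_self f volume
  rw [integral_congr_ae hodd, integral_neg] at h
  have h2 : (2 : ℝ) • ∫ t, f t = 0 := by
    rw [two_smul]
    nth_rw 1 [← h]
    exact neg_add_cancel _
  exact (smul_eq_zero.mp h2).resolve_left two_ne_zero

theorem exp_apply_of_apply_eq_smul {E : Type*} [NormedAddCommGroup E] [NormedSpace ℂ E]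
    [CompleteSpace E] {A : E →L[ℂ] E} {v : E} {c : ℂ} (h : A v = c • v) :
    NormedSpace.exp A v = Complex.exp c • v := by
  have hpow : ∀ n : ℕ, (A ^ n) v = c ^ n • v := by
    intro n
    induction n with
    | zero => simp
    | succ n ih => rw [pow_succ, pow_succ, mul_apply_eq_comp, h, map_smul, ih,
        smul_smul, mul_comm]
  rw [NormedSpace.exp_eq_tsum ℂ, Complex.exp_eq_exp_ℂ, NormedSpace.exp_eq_tsum ℂ]
  dsimp only
  rw [← (NormedSpace.expSeries_summable' (𝕂 := ℂ) c).tsum_smul_const,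
    ← ContinuousLinearMap.apply_apply v,
    (ContinuousLinearMap.apply ℂ E v).map_tsum (NormedSpace.expSeries_summable' A)]
  exact tsum_congr fun n => by
    rw [ContinuousLinearMap.apply_apply, smul_apply, hpow, smul_smul, smul_eq_mul]

section Heisenberg

variable {V : Type*} [NormedAddCommGroup V] [InnerProductSpace ℂ V] [CompleteSpace V]

theorem Complex.I_mul_ofReal_mem_skewAdjoint (t : ℝ) : Complex.I * t ∈ skewAdjoint ℂ := by
  rw [skewAdjoint.mem_iff, star_mul', Complex.star_def, Complex.conj_I, Complex.conj_ofReal]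
  ring

theorem IsSelfAdjoint.exp_smul_mem_unitary {A : V →L[ℂ] V} (hA : IsSelfAdjoint A) {z : ℂ}
    (hz : z ∈ skewAdjoint ℂ) : NormedSpace.exp (z • A) ∈ unitary (V →L[ℂ] V) := by
  let +nondep : NormedAlgebra ℚ (V →L[ℂ] V) := .restrictScalars ℚ ℂ _
  exact NormedSpace.exp_mem_unitary_of_mem_skewAdjoint (hA.smul_mem_skewAdjoint hz)

noncomputable def heisenberg (A B : V →L[ℂ] V) (t : ℝ) : V →L[ℂ] V :=
  NormedSpace.exp ((Complex.I * t) • A) * B * NormedSpace.exp ((-(Complex.I * t)) • A)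

theorem norm_heisenberg {A : V →L[ℂ] V} (hA : IsSelfAdjoint A) (B : V →L[ℂ] V) (t : ℝ) :
    ‖heisenberg A B t‖ = ‖B‖ := by
  have hz := Complex.I_mul_ofReal_mem_skewAdjoint t
  rw [heisenberg, CStarRing.norm_mul_mem_unitary _ (hA.exp_smul_mem_unitary (neg_mem hz)),
    CStarRing.norm_mem_unitary_mul _ (hA.exp_smul_mem_unitary hz)]

theorem continuous_heisenberg (A B : V →L[ℂ] V) : Continuous (heisenberg A B) := by
  let +nondep : NormedAlgebra ℚ (V →L[ℂ] V) := .restrictScalars ℚ ℂ _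
  unfold heisenberg
  fun_prop

theorem IsSelfAdjoint.inner_exp_I_mul_smul_apply {A : V →L[ℂ] V} (hA : IsSelfAdjoint A) {b : V}
    {μ : ℝ} (hb : A b = (μ : ℂ) • b) (t : ℝ) (y : V) :
    ⟪b, NormedSpace.exp ((Complex.I * t) • A) y⟫ = Complex.exp (Complex.I * t * μ) * ⟪b, y⟫ := by
  have hb' : (star (Complex.I * t) • A) b = (star (Complex.I * t) * μ) • b := by
    rw [smul_apply, hb, smul_smul]
  rw [← ContinuousLinearMap.adjoint_inner_left, ← ContinuousLinearMap.star_eq_adjoint,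
    NormedSpace.star_exp, star_smul, hA.star_eq, exp_apply_of_apply_eq_smul hb', inner_smul_left,
    ← Complex.exp_conj]
  simp

theorem IsSelfAdjoint.inner_heisenberg_apply {A : V →L[ℂ] V} (hA : IsSelfAdjoint A) {b ψ : V}
    {μ E : ℝ} (hb : A b = (μ : ℂ) • b) (hψ : A ψ = (E : ℂ) • ψ) (B : V →L[ℂ] V) (t : ℝ) :
    ⟪b, heisenberg A B t ψ⟫ = Complex.exp (Complex.I * t * ↑(μ - E)) * ⟪b, B ψ⟫ := by
  have hψ' : ((-(Complex.I * t)) • A) ψ = (-(Complex.I * t) * E) • ψ := by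
    rw [smul_apply, hψ, smul_smul]
  rw [heisenberg, mul_apply_eq_comp, mul_apply_eq_comp, exp_apply_of_apply_eq_smul hψ', map_smul,
    hA.inner_exp_I_mul_smul_apply hb, inner_smul_right, ← mul_assoc, ← Complex.exp_add]
  push_cast
  ring_nf

noncomputable def quasiAdiabaticGenerator (W : ℝ → ℝ) (A B : V →L[ℂ] V) : V →L[ℂ] V :=
  ∫ t : ℝ, W t • heisenberg A B t

variable {W : ℝ → ℝ} {A : V →L[ℂ] V}

theorem IsSelfAdjoint.integrable_smul_heisenberg (hA : IsSelfAdjoint A) (hW : Integrable W)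
    (B : V →L[ℂ] V) : Integrable (fun t => W t • heisenberg A B t) :=
  hW.smul_bdd ‖B‖ (continuous_heisenberg A B).aestronglyMeasurable
    (ae_of_all _ fun t => (norm_heisenberg hA B t).le)

theorem IsSelfAdjoint.norm_quasiAdiabaticGenerator_le (hA : IsSelfAdjoint A) (hW : Integrable W)
    (B : V →L[ℂ] V) : ‖quasiAdiabaticGenerator W A B‖ ≤ (∫ t, |W t|) * ‖B‖ := by
  rw [← integral_mul_const]
  refine norm_integral_le_of_norm_le (hW.abs.mul_const _) (ae_of_all _ fun t => ?_)
  rw [norm_smul, norm_heisenberg hA, Real.norm_eq_abs]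

theorem IsSelfAdjoint.inner_quasiAdiabaticGenerator_apply (hA : IsSelfAdjoint A)
    (hW : Integrable W) {b ψ : V} {μ E : ℝ} (hb : A b = (μ : ℂ) • b) (hψ : A ψ = (E : ℂ) • ψ)
    (B : V →L[ℂ] V) :
    ⟪b, quasiAdiabaticGenerator W A B ψ⟫
      = (∫ t : ℝ, (W t : ℂ) * Complex.exp (Complex.I * t * ↑(μ - E))) * ⟪b, B ψ⟫ := by
  let L : (V →L[ℂ] V) →L[ℂ] ℂ := (innerSL ℂ b).comp (ContinuousLinearMap.apply ℂ V ψ)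
  have hL : ∀ M, L M = ⟪b, M ψ⟫ := fun _ => rfl
  rw [quasiAdiabaticGenerator, ← hL, ← L.integral_comp_comm (hA.integrable_smul_heisenberg hW B),
    ← integral_mul_const]
  refine integral_congr_ae (ae_of_all _ fun t => ?_)
  dsimp only
  rw [hL, smul_apply, ← Complex.coe_smul, inner_smul_right, hA.inner_heisenberg_apply hb hψ]
  ring

end Heisenberg

section spectral

variable {V : Type*} [NormedAddCommGroup V] [InnerProductSpace ℂ V] [CompleteSpace V]
  {A : V →L[ℂ] V} {b ψ : V} {μ E : ℝ}

theorem IsSelfAdjoint.inner_apply_of_eigen (hA : IsSelfAdjoint A) (hb : A b = (μ : ℂ) • b)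
    (y : V) : ⟪b, A y⟫ = μ * ⟪b, y⟫ := by
  rw [← ContinuousLinearMap.adjoint_inner_left, ← ContinuousLinearMap.star_eq_adjoint, hA.star_eq,
    hb, inner_smul_left, Complex.conj_ofReal]

theorem IsSelfAdjoint.inner_eq_zero_of_eigen (hA : IsSelfAdjoint A) (hb : A b = (μ : ℂ) • b)
    (hψ : A ψ = (E : ℂ) • ψ) (hμE : μ ≠ E) : ⟪b, ψ⟫ = 0 := by
  have h := hA.inner_apply_of_eigen hb ψ
  rw [hψ, inner_smul_right] at h
  exact (mul_eq_mul_right_iff.mp h).resolve_left (by exact_mod_cast hμE.symm)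

variable {W : ℝ → ℝ} {Δ : ℝ} {B : V →L[ℂ] V} {ψ' : V} {e' : ℂ}

theorem IsSelfAdjoint.inner_I_smul_quasiAdiabaticGenerator_apply (hA : IsSelfAdjoint A)
    (hW : Integrable W) (hWodd : ∀ t : ℝ, t ≠ 0 → W (-t) = -W t)
    (hWfourier : ∀ l : ℝ, Δ ≤ |l| →
      ∫ t : ℝ, (W t : ℂ) * Complex.exp (Complex.I * t * l) = Complex.I / l)
    (hψ : A ψ = (E : ℂ) • ψ) (hsimple : ∀ v : V, A v = (E : ℂ) • v → ∃ c : ℂ, v = c • ψ)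
    (hgap : ∀ μ : ℝ, (∃ v : V, v ≠ 0 ∧ A v = (μ : ℂ) • v) → μ = E ∨ Δ ≤ μ - E)
    (hpar : ⟪ψ, ψ'⟫ = 0) (hder : B ψ + A ψ' = e' • ψ + (E : ℂ) • ψ')
    (hb0 : b ≠ 0) (hb : A b = (μ : ℂ) • b) :
    ⟪b, Complex.I • quasiAdiabaticGenerator W A B ψ⟫ = ⟪b, ψ'⟫ := by
  rw [inner_smul_right, hA.inner_quasiAdiabaticGenerator_apply hW hb hψ]
  rcases eq_or_ne μ E with rfl | hμE
  · have hW0 : ∫ t : ℝ, (W t : ℂ) = 0 :=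
      integral_eq_zero_of_odd fun t ht => by rw [hWodd t ht, Complex.ofReal_neg]
    obtain ⟨c, rfl⟩ := hsimple b hb
    simp [hW0, hpar]
  · have hgapμ := (hgap μ ⟨b, hb0, hb⟩).resolve_left hμE
    have hB : ⟪b, B ψ⟫ = (E - μ) * ⟪b, ψ'⟫ := by
      rw [eq_sub_of_add_eq hder, inner_sub_right, inner_add_right, inner_smul_right,
        inner_smul_right, hA.inner_eq_zero_of_eigen hb hψ hμE, hA.inner_apply_of_eigen hb]
      ring
    have hμE' : ((μ - E : ℝ) : ℂ) ≠ 0 := by exact_mod_cast sub_ne_zero.mpr hμE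
    rw [hWfourier _ (hgapμ.trans (le_abs_self _)), hB]
    push_cast at hμE' ⊢
    field_simp
    rw [Complex.I_sq]
    ring

theorem IsSelfAdjoint.I_smul_quasiAdiabaticGenerator_apply [FiniteDimensional ℂ V]
    (hA : IsSelfAdjoint A)
    (hW : Integrable W) (hWodd : ∀ t : ℝ, t ≠ 0 → W (-t) = -W t)
    (hWfourier : ∀ l : ℝ, Δ ≤ |l| →
      ∫ t : ℝ, (W t : ℂ) * Complex.exp (Complex.I * t * l) = Complex.I / l)
    (hψ : A ψ = (E : ℂ) • ψ) (hsimple : ∀ v : V, A v = (E : ℂ) • v → ∃ c : ℂ, v = c • ψ)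
    (hgap : ∀ μ : ℝ, (∃ v : V, v ≠ 0 ∧ A v = (μ : ℂ) • v) → μ = E ∨ Δ ≤ μ - E)
    (hpar : ⟪ψ, ψ'⟫ = 0) (hder : B ψ + A ψ' = e' • ψ + (E : ℂ) • ψ') :
    Complex.I • quasiAdiabaticGenerator W A B ψ = ψ' := by
  have hT : (A : V →ₗ[ℂ] V).IsSymmetric := ContinuousLinearMap.isSelfAdjoint_iff_isSymmetric.mp hA
  let b := hT.eigenvectorBasis rfl
  refine InnerProductSpace.ext_inner_left_basis b.toBasis fun i => ?_
  rw [OrthonormalBasis.coe_toBasis]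
  exact hA.inner_I_smul_quasiAdiabaticGenerator_apply hW hWodd hWfourier hψ hsimple hgap hpar hder
    (b.toBasis.ne_zero i) (hT.apply_eigenvectorBasis rfl i)

end spectral

theorem exists_deriv_of_eigen_equation {V : Type*} [NormedAddCommGroup V] [InnerProductSpace ℂ V]
    {H : ℝ → V →L[ℂ] V} {H' : V →L[ℂ] V} {ψ : ℝ → V} {ψ' : V} {E : ℝ → ℝ} {s : Set ℝ} {θ : ℝ}
    (hH : HasDerivWithinAt H H' s θ) (hψ : HasDerivWithinAt ψ ψ' s θ)
    (hs : UniqueDiffWithinAt ℝ s θ) (hθ : θ ∈ s) (hunit : ∀ σ ∈ s, ‖ψ σ‖ = 1)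
    (heig : ∀ σ ∈ s, H σ (ψ σ) = (E σ : ℂ) • ψ σ) :
    ∃ e' : ℂ, H' (ψ θ) + H θ ψ' = e' • ψ θ + (E θ : ℂ) • ψ' := by
  -- `E` is differentiable because it is the expectation value `⟪ψ, H ψ⟫`.
  have hE : ∀ σ ∈ s, (E σ : ℂ) = ⟪ψ σ, H σ (ψ σ)⟫ := fun σ hσ => by
    rw [heig σ hσ, inner_smul_right, inner_self_eq_norm_sq_to_K, hunit σ hσ]
    simp
  have hHψ := hH.clm_apply_of_complex hψ
  have hEψ := ((hψ.inner ℂ hHψ).smul hψ).congr_of_mem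
    (fun σ hσ => (heig σ hσ).trans (by rw [hE σ hσ]; rfl)) hθ
  exact ⟨_, (hs.eq_deriv s hHψ hEψ).trans (by rw [← hE θ hθ, add_comm])⟩

theorem quasi_adiabatic_evolution_eq_groundstate_general
    {V : Type*} [NormedAddCommGroup V] [InnerProductSpace ℂ V] [FiniteDimensional ℂ V]
    (s : ℝ) (Δ : ℝ) (W : ℝ → ℝ)
    (hWint : MeasureTheory.Integrable W)
    (hWodd : ∀ t : ℝ, t ≠ 0 → W (-t) = -W t)
    (hWfourier : ∀ l : ℝ, Δ ≤ |l| →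
      ∫ t : ℝ, (W t : ℂ) * Complex.exp (Complex.I * t * l) = Complex.I / l)
    (H H' : ℝ → V →L[ℂ] V) (E0 : ℝ → ℝ) (ψ0 ψ0' : ℝ → V) (U : ℝ → V →L[ℂ] V)
    (hsa : ∀ θ ∈ Set.Icc 0 s, IsSelfAdjoint (H θ))
    (hH : ∀ θ ∈ Set.Icc 0 s, HasDerivWithinAt H (H' θ) (Set.Icc 0 s) θ)
    (hH'c : ContinuousOn H' (Set.Icc 0 s))
    (hunit : ∀ θ ∈ Set.Icc 0 s, ‖ψ0 θ‖ = 1)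
    (heig : ∀ θ ∈ Set.Icc 0 s, H θ (ψ0 θ) = (E0 θ : ℂ) • ψ0 θ)
    (hsimple : ∀ θ ∈ Set.Icc 0 s, ∀ v : V,
      H θ v = (E0 θ : ℂ) • v → ∃ c : ℂ, v = c • ψ0 θ)
    (hgap : ∀ θ ∈ Set.Icc 0 s, ∀ μ : ℝ,
      (∃ v : V, v ≠ 0 ∧ H θ v = (μ : ℂ) • v) → μ = E0 θ ∨ Δ ≤ μ - E0 θ)
    (hψ0 : ∀ θ ∈ Set.Icc 0 s, HasDerivWithinAt ψ0 (ψ0' θ) (Set.Icc 0 s) θ)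
    (hpar : ∀ θ ∈ Set.Icc 0 s, ⟪ψ0 θ, ψ0' θ⟫ = 0)
    (hU0 : U 0 = 1)
    (hU : ∀ θ ∈ Set.Icc 0 s, HasDerivWithinAt U
      (Complex.I • ((∫ t : ℝ, W t • (NormedSpace.exp ((Complex.I * t) • H θ) * H' θ *
          NormedSpace.exp ((-(Complex.I * t)) • H θ))) * U θ))
      (Set.Icc 0 s) θ) :
    ∀ θ ∈ Set.Icc 0 s, U θ (ψ0 0) = ψ0 θ := by
  let S t := Complex.I • quasiAdiabaticGenerator W (H t) (H' t)
  obtain ⟨C, hC⟩ := isCompact_Icc.exists_bound_of_continuousOn hH'c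
  have hS : ∀ t ∈ Ico 0 s, ‖S t‖ ≤ (∫ t, |W t|) * C := fun t ht => by
    have ht := Ico_subset_Icc_self ht
    rw [norm_smul, Complex.norm_I, one_mul]
    exact ((hsa t ht).norm_quasiAdiabaticGenerator_le hWint _).trans
      (mul_le_mul_of_nonneg_left (hC t ht) (integral_nonneg fun _ => abs_nonneg _))
  have hUψ : ∀ t ∈ Icc 0 s,
      HasDerivWithinAt (fun θ => U θ (ψ0 0)) (S t (U t (ψ0 0))) (Icc 0 s) t := fun t ht =>
    ((hU t ht).clm_apply_of_complex (hasDerivWithinAt_const _ _ _)).congr_deriv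
      (by rw [map_zero, add_zero]; rfl)
  have hψS : ∀ t ∈ Ico 0 s, HasDerivWithinAt ψ0 (S t (ψ0 t)) (Icc 0 s) t := fun t ht => by
    have ht' := Ico_subset_Icc_self ht
    obtain ⟨e', hder⟩ := exists_deriv_of_eigen_equation (hH t ht') (hψ0 t ht')
      (uniqueDiffOn_Icc (ht.1.trans_lt ht.2) t ht') ht' hunit heig
    exact (hψ0 t ht').congr_deriv ((hsa t ht').I_smul_quasiAdiabaticGenerator_apply hWint hWodd
      hWfourier (heig t ht') (hsimple t ht') (hgap t ht') (hpar t ht') hder).symm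
  exact eqOn_Icc_of_linear_ODE hS (fun t ht => (hUψ t ht).continuousWithinAt)
    (fun t ht => hUψ t (Ico_subset_Icc_self ht))
    (fun t ht => (hψ0 t ht).continuousWithinAt) hψS (by rw [hU0]; rfl)

/-- Quasi-adiabatic evolution exactly transports the parallel-transported
ground state: if `∂_θ U(θ) = i S(θ) U(θ)`, `U(0) = I`, with
`S(θ) = ∫ W(t) e^{itH(θ)} (∂_θ H(θ)) e^{-itH(θ)} dt`, where `W` is integrable, odd away
from `0`, and `∫ W(t) e^{itλ} dt = i/λ` for `|λ| ≥ Δ`, and if the gap of `H(θ)` above its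
simple lowest eigenvalue is at least `Δ` throughout, then `U(θ) ψ0(0) = ψ0(θ)`. -/
theorem quasi_adiabatic_evolution_eq_groundstate
    {V : Type*} [NormedAddCommGroup V] [InnerProductSpace ℂ V] [FiniteDimensional ℂ V]
    (s : ℝ) (hs : 0 ≤ s) (Δ : ℝ) (hΔ : 0 < Δ) (W : ℝ → ℝ)
    (hWint : MeasureTheory.Integrable W)
    (hWodd : ∀ t : ℝ, t ≠ 0 → W (-t) = -W t)
    (hWfourier : ∀ l : ℝ, Δ ≤ |l| →
      ∫ t : ℝ, (W t : ℂ) * Complex.exp (Complex.I * t * l) = Complex.I / l)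
    (H H' : ℝ → V →L[ℂ] V) (E0 : ℝ → ℝ) (ψ0 ψ0' : ℝ → V) (U : ℝ → V →L[ℂ] V)
    (hsa : ∀ θ ∈ Set.Icc 0 s, IsSelfAdjoint (H θ))
    (hH : ∀ θ ∈ Set.Icc 0 s, HasDerivWithinAt H (H' θ) (Set.Icc 0 s) θ)
    (hH'c : ContinuousOn H' (Set.Icc 0 s))
    (hunit : ∀ θ ∈ Set.Icc 0 s, ‖ψ0 θ‖ = 1)
    (heig : ∀ θ ∈ Set.Icc 0 s, H θ (ψ0 θ) = (E0 θ : ℂ) • ψ0 θ)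
    (hsimple : ∀ θ ∈ Set.Icc 0 s, ∀ v : V,
      H θ v = (E0 θ : ℂ) • v → ∃ c : ℂ, v = c • ψ0 θ)
    (hgap : ∀ θ ∈ Set.Icc 0 s, ∀ μ : ℝ,
      (∃ v : V, v ≠ 0 ∧ H θ v = (μ : ℂ) • v) → μ = E0 θ ∨ Δ ≤ μ - E0 θ)
    (hψ0 : ∀ θ ∈ Set.Icc 0 s, HasDerivWithinAt ψ0 (ψ0' θ) (Set.Icc 0 s) θ)
    (hψ0'c : ContinuousOn ψ0' (Set.Icc 0 s))
    (hpar : ∀ θ ∈ Set.Icc 0 s, ⟪ψ0 θ, ψ0' θ⟫ = 0)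
    (hU0 : U 0 = 1)
    (hU : ∀ θ ∈ Set.Icc 0 s, HasDerivWithinAt U
      (Complex.I • ((∫ t : ℝ, W t • (NormedSpace.exp ((Complex.I * t) • H θ) * H' θ *
          NormedSpace.exp ((-(Complex.I * t)) • H θ))) * U θ))
      (Set.Icc 0 s) θ) :
    ∀ θ ∈ Set.Icc 0 s, U θ (ψ0 0) = ψ0 θ :=
  quasi_adiabatic_evolution_eq_groundstate_general s Δ W hWint hWodd hWfourier H H' E0 ψ0 ψ0' U hsa
    hH hH'c hunit heig hsimple hgap hψ0 hpar hU0 hU
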